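/- arXiv:2406.16827 — 3 statements merged into one kernel-verified Lean document; each statement's English description precedes it below -/
import Mathlib

section
/- For all natural numbers a, b with a ≥ 1 and b ≥ 1, the binomial coefficient satisfies a^b / b! ≤ C(a+b−1, b) ≤ (a^b / b!)·e^{b²/a}. -/
/-!
Since `b! · C(a+b-1, b) = a (a+1) ⋯ (a+b-1)` is the rising factorial, it suffices to compare it
with `a^b`. The lower bound is factorwise. For the upper bound, `a + i ≤ a · e^{i/a}` (from
`1 + x ≤ eˣ`), and multiplying these factor by factor the exponents add up to less than `b²/a`.
-/

open Real

lemma add_le_mul_exp_div {x : ℝ} (hx : 0 < x) (y : ℝ) : x + y ≤ x * exp (y / x) :=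
  calc x + y = x * (y / x + 1) := by field_simp; ring
    _ ≤ x * exp (y / x) := mul_le_mul_of_nonneg_left (add_one_le_exp _) hx.le

lemma Nat.ascFactorial_le_pow_mul_exp {a : ℕ} (ha : 0 < a) :
    ∀ b : ℕ, (a.ascFactorial b : ℝ) ≤ (a : ℝ) ^ b * exp ((b : ℝ) ^ 2 / a)
  | 0 => by simp
  | b + 1 => by
    have ha' : (0 : ℝ) < a := by exact_mod_cast ha
    have hexp : (b : ℝ) ^ 2 / a + b / a ≤ ((b : ℝ) + 1) ^ 2 / a := by
      rw [← add_div]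
      gcongr
      nlinarith
    rw [Nat.ascFactorial_succ]
    push_cast
    calc ((a : ℝ) + b) * a.ascFactorial b
        ≤ (a * exp (b / a)) * ((a : ℝ) ^ b * exp ((b : ℝ) ^ 2 / a)) :=
          mul_le_mul (add_le_mul_exp_div ha' _) (ascFactorial_le_pow_mul_exp ha b)
            (by positivity) (by positivity)
      _ = (a : ℝ) ^ (b + 1) * exp ((b : ℝ) ^ 2 / a + b / a) := by
          rw [exp_add, pow_succ]; ring
      _ ≤ (a : ℝ) ^ (b + 1) * exp (((b : ℝ) + 1) ^ 2 / a) := by gcongr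

theorem choose_bounds_general (a b : ℕ) (ha : 1 ≤ a) :
    (a : ℝ) ^ b / (b.factorial : ℝ) ≤ ((a + b - 1).choose b : ℝ) ∧
    ((a + b - 1).choose b : ℝ) ≤ (a : ℝ) ^ b / (b.factorial : ℝ) *
      Real.exp ((b : ℝ) ^ 2 / (a : ℝ)) := by
  have hasc : (a.ascFactorial b : ℝ) = b.factorial * ((a + b - 1).choose b : ℝ) := by
    exact_mod_cast Nat.ascFactorial_eq_factorial_mul_choose' a b
  have hfac : (0 : ℝ) < b.factorial := by exact_mod_cast b.factorial_pos
  constructor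
  · rw [div_le_iff₀ hfac, mul_comm, ← hasc]
    exact_mod_cast Nat.pow_succ_le_ascFactorial a b
  · rw [div_mul_eq_mul_div, le_div_iff₀ hfac, mul_comm _ (b.factorial : ℝ), ← hasc]
    exact Nat.ascFactorial_le_pow_mul_exp ha b

/-- For natural numbers `a, b ≥ 1`:
`a^b/b! ≤ C(a+b−1, b) ≤ (a^b/b!)·e^{b²/a}`. -/
theorem choose_bounds (a b : ℕ) (ha : 1 ≤ a) (hb : 1 ≤ b) :
    (a : ℝ) ^ b / (b.factorial : ℝ) ≤ ((a + b - 1).choose b : ℝ) ∧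
    ((a + b - 1).choose b : ℝ) ≤ (a : ℝ) ^ b / (b.factorial : ℝ) *
      Real.exp ((b : ℝ) ^ 2 / (a : ℝ)) :=
  choose_bounds_general a b ha
end

section
/- For all integers n ≥ 1, k ≥ 1, d ≥ 1, the quantity F(k,n,d) := (1/(4^n·(k!)³)) ∑_{S,T⊆[n]} ∑_{α,γ,δ∈S_k} d^{|S∩T|·c(αδγ) + |S∩Tᶜ|·c(α) + |Sᶜ∩T|·c(γ) + |Sᶜ∩Tᶜ|·c(δ)} satisfies F(k,n,d) ≤ d^{nk}/(k!)³ + d^{nk}·((1+d)/(2d))^n. -/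
open scoped BigOperators

/-- The cycle number of a permutation: the number of cycles in the disjoint cycle
decomposition, counting fixed points as 1-cycles. -/
def cycleNumber {k : ℕ} (α : Equiv.Perm (Fin k)) : ℕ :=
  Multiset.card α.cycleType + (k - α.support.card)

lemma two_mul_card_cycleType_le {k : ℕ} (α : Equiv.Perm (Fin k)) :
    2 * Multiset.card α.cycleType ≤ α.support.card := by
  rw [← Equiv.Perm.sum_cycleType, mul_comm, ← smul_eq_mul]
  exact Multiset.card_nsmul_le_sum (fun x hx => Equiv.Perm.two_le_of_mem_cycleType hx)

lemma support_card_le {k : ℕ} (α : Equiv.Perm (Fin k)) : α.support.card ≤ k := by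
  simpa using Finset.card_le_univ α.support

lemma cycleNumber_le {k : ℕ} (α : Equiv.Perm (Fin k)) : cycleNumber α ≤ k := by
  have h1 := two_mul_card_cycleType_le α
  have h2 := support_card_le α
  unfold cycleNumber; omega

lemma cycleNumber_one (k : ℕ) : cycleNumber (1 : Equiv.Perm (Fin k)) = k := by
  simp [cycleNumber]

lemma cycleNumber_lt {k : ℕ} {α : Equiv.Perm (Fin k)} (h : α ≠ 1) :
    cycleNumber α ≤ k - 1 := by
  have h1 := two_mul_card_cycleType_le α
  have h2 := support_card_le α
  have h3 : 1 < α.support.card := Equiv.Perm.one_lt_card_support_of_ne_one h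
  unfold cycleNumber; omega

lemma prodIndicatorST {n : ℕ} (x1 x2 x3 x4 : ℝ) (S T : Finset (Fin n)) :
    x1 ^ (S ∩ T).card * x2 ^ (S ∩ Tᶜ).card * x3 ^ (Sᶜ ∩ T).card * x4 ^ (Sᶜ ∩ Tᶜ).card
      = ∏ i : Fin n,
          (if i ∈ S then (if i ∈ T then x1 else x2) else (if i ∈ T then x3 else x4)) := by
  classical
  rw [Finset.prod_ite, Finset.prod_ite, Finset.prod_ite]
  simp only [Finset.prod_const, Finset.filter_filter]
  have e1 : Finset.filter (fun i => i ∈ S ∧ i ∈ T) Finset.univ = S ∩ T := by ext i; simp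
  have e2 : Finset.filter (fun i => i ∈ S ∧ i ∉ T) Finset.univ = S ∩ Tᶜ := by ext i; simp
  have e3 : Finset.filter (fun i => i ∉ S ∧ i ∈ T) Finset.univ = Sᶜ ∩ T := by ext i; simp
  have e4 : Finset.filter (fun i => i ∉ S ∧ i ∉ T) Finset.univ = Sᶜ ∩ Tᶜ := by ext i; simp
  rw [e1, e2, e3, e4]
  ring

lemma sum_sum_pow_card (n : ℕ) (x1 x2 x3 x4 : ℝ) :
    ∑ S : Finset (Fin n), ∑ T : Finset (Fin n),
      x1 ^ (S ∩ T).card * x2 ^ (S ∩ Tᶜ).card * x3 ^ (Sᶜ ∩ T).card * x4 ^ (Sᶜ ∩ Tᶜ).card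
      = (x1 + x2 + x3 + x4) ^ n := by
  classical
  set v : Bool × Bool → ℝ := fun q =>
    if q.1 then (if q.2 then x1 else x2) else (if q.2 then x3 else x4) with hv
  have hsum : x1 + x2 + x3 + x4 = ∑ q : Bool × Bool, v q := by
    simp [hv, Fintype.sum_prod_type]; ring
  have h1 : (x1 + x2 + x3 + x4) ^ n = ∑ p : Fin n → Bool × Bool, ∏ i, v (p i) := by
    rw [hsum]
    have : (∑ q : Bool × Bool, v q) ^ n = ∏ _i : Fin n, ∑ q : Bool × Bool, v q := by
      simp [Finset.prod_const]
    rw [this, Finset.prod_univ_sum]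
    simp
  have hbij : Function.Bijective (fun q : Finset (Fin n) × Finset (Fin n) =>
      (fun i => (decide (i ∈ q.1), decide (i ∈ q.2)) : Fin n → Bool × Bool)) := by
    rw [Fintype.bijective_iff_injective_and_card]
    constructor
    · rintro ⟨S, T⟩ ⟨S', T'⟩ h
      have h' : ∀ i : Fin n, (decide (i ∈ S), decide (i ∈ T)) = (decide (i ∈ S'), decide (i ∈ T')) :=
        fun i => congrFun h i
      ext i
      · have h1 := (Prod.ext_iff.mp (h' i)).1
        simpa [decide_eq_decide] using h1
      · have h2 := (Prod.ext_iff.mp (h' i)).2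
        simpa [decide_eq_decide] using h2
    · simp only [Fintype.card_prod, Fintype.card_fun, Fintype.card_finset, Fintype.card_bool,
        Fintype.card_fin]
      rw [← pow_add, show (2 * 2 : ℕ) = 2 ^ 2 by rfl, ← pow_mul, two_mul]
  calc ∑ S : Finset (Fin n), ∑ T : Finset (Fin n),
        x1 ^ (S ∩ T).card * x2 ^ (S ∩ Tᶜ).card * x3 ^ (Sᶜ ∩ T).card * x4 ^ (Sᶜ ∩ Tᶜ).card
      = ∑ q : Finset (Fin n) × Finset (Fin n),
          x1 ^ (q.1 ∩ q.2).card * x2 ^ (q.1 ∩ q.2ᶜ).card * x3 ^ (q.1ᶜ ∩ q.2).card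
            * x4 ^ (q.1ᶜ ∩ q.2ᶜ).card := by rw [Fintype.sum_prod_type]
    _ = ∑ p : Fin n → Bool × Bool, ∏ i, v (p i) := by
          apply Fintype.sum_bijective _ hbij
          rintro ⟨S, T⟩
          rw [prodIndicatorST]
          apply Finset.prod_congr rfl
          intro i _
          simp [hv]
    _ = (x1 + x2 + x3 + x4) ^ n := h1.symm

lemma card_partition {n : ℕ} (S T : Finset (Fin n)) :
    (S ∩ T).card + (S ∩ Tᶜ).card + (Sᶜ ∩ T).card + (Sᶜ ∩ Tᶜ).card = n := by
  classical
  have h1 : S ∩ Tᶜ = S \ T := by ext i; simp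
  have h2 : Sᶜ ∩ Tᶜ = Sᶜ \ T := by ext i; simp
  have h3 : Sᶜ ∩ T = Sᶜ ∩ T := rfl
  have e1 : (S ∩ T).card + (S \ T).card = S.card := Finset.card_inter_add_card_sdiff S T
  have e2 : (Sᶜ ∩ T).card + (Sᶜ \ T).card = Sᶜ.card := Finset.card_inter_add_card_sdiff Sᶜ T
  have e3 : S.card + Sᶜ.card = n := by
    simpa using Finset.card_add_card_compl S
  rw [h1, h2]
  omega

lemma sum_ST_le (n : ℕ) (D : ℝ) (hD : 1 ≤ D) (c1 c2 c3 c4 : ℕ) (y1 y2 y3 y4 : ℝ)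
    (h1 : D ^ c1 ≤ y1) (h2 : D ^ c2 ≤ y2) (h3 : D ^ c3 ≤ y3) (h4 : D ^ c4 ≤ y4) :
    ∑ S : Finset (Fin n), ∑ T : Finset (Fin n),
      D ^ ((S ∩ T).card * c1 + (S ∩ Tᶜ).card * c2 + (Sᶜ ∩ T).card * c3 + (Sᶜ ∩ Tᶜ).card * c4)
      ≤ (y1 + y2 + y3 + y4) ^ n := by
  have hD0 : (0:ℝ) ≤ D := le_trans zero_le_one hD
  have hc : ∀ c : ℕ, (0:ℝ) ≤ D ^ c := fun c => pow_nonneg hD0 c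
  have hy1 : (0:ℝ) ≤ y1 := le_trans (hc c1) h1
  have hy2 : (0:ℝ) ≤ y2 := le_trans (hc c2) h2
  have hy3 : (0:ℝ) ≤ y3 := le_trans (hc c3) h3
  have hy4 : (0:ℝ) ≤ y4 := le_trans (hc c4) h4
  rw [← sum_sum_pow_card n y1 y2 y3 y4]
  refine Finset.sum_le_sum (fun S _ => Finset.sum_le_sum (fun T _ => ?_))
  rw [pow_add, pow_add, pow_add, pow_mul', pow_mul', pow_mul', pow_mul']
  have b1 : (D ^ c1) ^ (S ∩ T).card ≤ y1 ^ (S ∩ T).card :=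
    pow_le_pow_left₀ (hc c1) h1 _
  have b2 : (D ^ c2) ^ (S ∩ Tᶜ).card ≤ y2 ^ (S ∩ Tᶜ).card :=
    pow_le_pow_left₀ (hc c2) h2 _
  have b3 : (D ^ c3) ^ (Sᶜ ∩ T).card ≤ y3 ^ (Sᶜ ∩ T).card :=
    pow_le_pow_left₀ (hc c3) h3 _
  have b4 : (D ^ c4) ^ (Sᶜ ∩ Tᶜ).card ≤ y4 ^ (Sᶜ ∩ Tᶜ).card :=
    pow_le_pow_left₀ (hc c4) h4 _
  have n1 : (0:ℝ) ≤ (D ^ c1) ^ (S ∩ T).card := pow_nonneg (hc c1) _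
  have n2 : (0:ℝ) ≤ (D ^ c2) ^ (S ∩ Tᶜ).card := pow_nonneg (hc c2) _
  have n3 : (0:ℝ) ≤ (D ^ c3) ^ (Sᶜ ∩ T).card := pow_nonneg (hc c3) _
  have n4 : (0:ℝ) ≤ (D ^ c4) ^ (Sᶜ ∩ Tᶜ).card := pow_nonneg (hc c4) _
  have m1 : (0:ℝ) ≤ y1 ^ (S ∩ T).card := pow_nonneg hy1 _
  have m2 : (0:ℝ) ≤ y2 ^ (S ∩ Tᶜ).card := pow_nonneg hy2 _
  calc (D ^ c1) ^ (S ∩ T).card * (D ^ c2) ^ (S ∩ Tᶜ).card * (D ^ c3) ^ (Sᶜ ∩ T).card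
        * (D ^ c4) ^ (Sᶜ ∩ Tᶜ).card
      ≤ y1 ^ (S ∩ T).card * y2 ^ (S ∩ Tᶜ).card * y3 ^ (Sᶜ ∩ T).card * y4 ^ (Sᶜ ∩ Tᶜ).card := by
        apply mul_le_mul _ b4 n4 (by positivity)
        apply mul_le_mul _ b3 n3 (by positivity)
        exact mul_le_mul b1 b2 n2 m1

/-- For `n, k, d ≥ 1`, the quantity
`F(k,n,d) = (1/(4^n (k!)³)) ∑_{S,T⊆[n]} ∑_{α,γ,δ∈S_k}
  d^{|S∩T|c(αδγ) + |S∩Tᶜ|c(α) + |Sᶜ∩T|c(γ) + |Sᶜ∩Tᶜ|c(δ)}`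
satisfies `F ≤ d^{nk}/(k!)³ + d^{nk}((1+d)/(2d))^n`. -/
theorem F_bound (n k d : ℕ) (hn : 1 ≤ n) (hk : 1 ≤ k) (hd : 1 ≤ d) :
    (1 / ((4 : ℝ) ^ n * (k.factorial : ℝ) ^ 3)) *
        ∑ S : Finset (Fin n), ∑ T : Finset (Fin n),
          ∑ α : Equiv.Perm (Fin k), ∑ γ : Equiv.Perm (Fin k), ∑ δ : Equiv.Perm (Fin k),
            (d : ℝ) ^ ((S ∩ T).card * cycleNumber (α * δ * γ)
              + (S ∩ Tᶜ).card * cycleNumber α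
              + (Sᶜ ∩ T).card * cycleNumber γ
              + (Sᶜ ∩ Tᶜ).card * cycleNumber δ) ≤
      (d : ℝ) ^ (n * k) / (k.factorial : ℝ) ^ 3 +
        (d : ℝ) ^ (n * k) * ((1 + (d : ℝ)) / (2 * d)) ^ n := by
  classical
  have hD : (1:ℝ) ≤ (d:ℝ) := by exact_mod_cast hd
  set D : ℝ := (d : ℝ) with hDdef
  have hD0 : (0:ℝ) < D := lt_of_lt_of_le one_pos hD
  set K : ℝ := ((k.factorial : ℝ)) ^ 3 with hKdef
  have hK : (0:ℝ) < K := by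
    have : (0:ℝ) < (k.factorial : ℝ) := by exact_mod_cast k.factorial_pos
    positivity
  set B : ℝ := (2 * D ^ k + 2 * D ^ (k-1)) ^ n with hBdef
  have hBpos : (0:ℝ) ≤ B := by positivity
  have hbig : ∀ σ : Equiv.Perm (Fin k), D ^ (cycleNumber σ) ≤ D ^ k :=
    fun σ => pow_le_pow_right₀ hD (cycleNumber_le σ)
  have hsmall : ∀ σ : Equiv.Perm (Fin k), σ ≠ 1 → D ^ (cycleNumber σ) ≤ D ^ (k-1) :=
    fun σ hσ => pow_le_pow_right₀ hD (cycleNumber_lt hσ)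
  have e1 : ∀ (S T : Finset (Fin n)),
      (∑ α : Equiv.Perm (Fin k), ∑ γ : Equiv.Perm (Fin k), ∑ δ : Equiv.Perm (Fin k),
        D ^ ((S ∩ T).card * cycleNumber (α * δ * γ) + (S ∩ Tᶜ).card * cycleNumber α
          + (Sᶜ ∩ T).card * cycleNumber γ + (Sᶜ ∩ Tᶜ).card * cycleNumber δ))
      = ∑ p : Equiv.Perm (Fin k) × Equiv.Perm (Fin k) × Equiv.Perm (Fin k),
          D ^ ((S ∩ T).card * cycleNumber (p.1 * p.2.2 * p.2.1)
            + (S ∩ Tᶜ).card * cycleNumber p.1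
            + (Sᶜ ∩ T).card * cycleNumber p.2.1 + (Sᶜ ∩ Tᶜ).card * cycleNumber p.2.2) := by
    intro S T
    rw [Fintype.sum_prod_type]
    exact Finset.sum_congr rfl fun a _ => by rw [Fintype.sum_prod_type]
  have total_le :
      (∑ S : Finset (Fin n), ∑ T : Finset (Fin n),
          ∑ α : Equiv.Perm (Fin k), ∑ γ : Equiv.Perm (Fin k), ∑ δ : Equiv.Perm (Fin k),
            D ^ ((S ∩ T).card * cycleNumber (α * δ * γ)
              + (S ∩ Tᶜ).card * cycleNumber α
              + (Sᶜ ∩ T).card * cycleNumber γ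
              + (Sᶜ ∩ Tᶜ).card * cycleNumber δ))
        ≤ K * B + (2:ℝ)^n * (2:ℝ)^n * D ^ (n * k) := by
    have step1 :
        (∑ S : Finset (Fin n), ∑ T : Finset (Fin n),
            ∑ α : Equiv.Perm (Fin k), ∑ γ : Equiv.Perm (Fin k), ∑ δ : Equiv.Perm (Fin k),
              D ^ ((S ∩ T).card * cycleNumber (α * δ * γ)
                + (S ∩ Tᶜ).card * cycleNumber α
                + (Sᶜ ∩ T).card * cycleNumber γ
                + (Sᶜ ∩ Tᶜ).card * cycleNumber δ))
          = ∑ p : Equiv.Perm (Fin k) × Equiv.Perm (Fin k) × Equiv.Perm (Fin k),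
              ∑ S : Finset (Fin n), ∑ T : Finset (Fin n),
                D ^ ((S ∩ T).card * cycleNumber (p.1 * p.2.2 * p.2.1)
                  + (S ∩ Tᶜ).card * cycleNumber p.1
                  + (Sᶜ ∩ T).card * cycleNumber p.2.1
                  + (Sᶜ ∩ Tᶜ).card * cycleNumber p.2.2) := by
      calc _ = ∑ S : Finset (Fin n), ∑ T : Finset (Fin n),
              ∑ p : Equiv.Perm (Fin k) × Equiv.Perm (Fin k) × Equiv.Perm (Fin k),
                D ^ ((S ∩ T).card * cycleNumber (p.1 * p.2.2 * p.2.1)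
                  + (S ∩ Tᶜ).card * cycleNumber p.1
                  + (Sᶜ ∩ T).card * cycleNumber p.2.1
                  + (Sᶜ ∩ Tᶜ).card * cycleNumber p.2.2) :=
            Finset.sum_congr rfl fun S _ => Finset.sum_congr rfl fun T _ => e1 S T
        _ = ∑ S : Finset (Fin n),
              ∑ p : Equiv.Perm (Fin k) × Equiv.Perm (Fin k) × Equiv.Perm (Fin k),
              ∑ T : Finset (Fin n),
                D ^ ((S ∩ T).card * cycleNumber (p.1 * p.2.2 * p.2.1)
                  + (S ∩ Tᶜ).card * cycleNumber p.1
                  + (Sᶜ ∩ T).card * cycleNumber p.2.1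
                  + (Sᶜ ∩ Tᶜ).card * cycleNumber p.2.2) :=
            Finset.sum_congr rfl fun S _ => Finset.sum_comm
        _ = _ := Finset.sum_comm
    rw [step1, ← Finset.sum_erase_add Finset.univ _
        (Finset.mem_univ ((1,1,1) : Equiv.Perm (Fin k) × Equiv.Perm (Fin k) × Equiv.Perm (Fin k)))]
    apply add_le_add
    · -- non-identity triples
      refine le_trans (Finset.sum_le_card_nsmul _ _ B ?_) ?_
      · rintro ⟨α, γ, δ⟩ hp
        have hne : ¬(α = 1 ∧ γ = 1 ∧ δ = 1) := by
          intro h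
          exact (Finset.mem_erase.mp hp).1 (by simp [h.1, h.2.1, h.2.2, Prod.ext_iff])
        dsimp only
        by_cases ha : α = 1 <;> by_cases hg : γ = 1 <;> by_cases hdl : δ = 1
        · exact absurd ⟨ha, hg, hdl⟩ hne
        · -- only δ ≠ 1
          subst ha; subst hg
          refine le_trans (sum_ST_le n D hD _ _ _ _
            (D^(k-1)) (D^k) (D^k) (D^(k-1)) ?_ ?_ ?_ ?_) (le_of_eq ?_)
          · have h1 : (1 : Equiv.Perm (Fin k)) * δ * 1 = δ := by group
            rw [h1]; exact hsmall δ hdl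
          · exact hbig 1
          · exact hbig 1
          · exact hsmall δ hdl
          · rw [hBdef]; congr 1; ring
        · -- only γ ≠ 1
          subst ha; subst hdl
          refine le_trans (sum_ST_le n D hD _ _ _ _
            (D^(k-1)) (D^k) (D^(k-1)) (D^k) ?_ ?_ ?_ ?_) (le_of_eq ?_)
          · have h1 : (1 : Equiv.Perm (Fin k)) * 1 * γ = γ := by group
            rw [h1]; exact hsmall γ hg
          · exact hbig 1
          · exact hsmall γ hg
          · exact hbig 1
          · rw [hBdef]; congr 1; ring
        · -- γ, δ ≠ 1
          refine le_trans (sum_ST_le n D hD _ _ _ _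
            (D^k) (D^k) (D^(k-1)) (D^(k-1)) ?_ ?_ ?_ ?_) (le_of_eq ?_)
          · exact hbig _
          · exact hbig α
          · exact hsmall γ hg
          · exact hsmall δ hdl
          · rw [hBdef]; congr 1; ring
        · -- only α ≠ 1
          subst hg; subst hdl
          refine le_trans (sum_ST_le n D hD _ _ _ _
            (D^(k-1)) (D^(k-1)) (D^k) (D^k) ?_ ?_ ?_ ?_) (le_of_eq ?_)
          · have h1 : α * (1 : Equiv.Perm (Fin k)) * 1 = α := by group
            rw [h1]; exact hsmall α ha
          · exact hsmall α ha
          · exact hbig 1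
          · exact hbig 1
          · rw [hBdef]; congr 1; ring
        · -- α, δ ≠ 1
          refine le_trans (sum_ST_le n D hD _ _ _ _
            (D^k) (D^(k-1)) (D^k) (D^(k-1)) ?_ ?_ ?_ ?_) (le_of_eq ?_)
          · exact hbig _
          · exact hsmall α ha
          · exact hbig γ
          · exact hsmall δ hdl
          · rw [hBdef]; congr 1; ring
        · -- α, γ ≠ 1
          refine le_trans (sum_ST_le n D hD _ _ _ _
            (D^k) (D^(k-1)) (D^(k-1)) (D^k) ?_ ?_ ?_ ?_) (le_of_eq ?_)
          · exact hbig _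
          · exact hsmall α ha
          · exact hsmall γ hg
          · exact hbig δ
          · rw [hBdef]; congr 1; ring
        · -- α, γ (and δ) ≠ 1
          refine le_trans (sum_ST_le n D hD _ _ _ _
            (D^k) (D^(k-1)) (D^(k-1)) (D^k) ?_ ?_ ?_ ?_) (le_of_eq ?_)
          · exact hbig _
          · exact hsmall α ha
          · exact hsmall γ hg
          · exact hbig δ
          · rw [hBdef]; congr 1; ring
      · -- card bound
        rw [nsmul_eq_mul]
        apply mul_le_mul_of_nonneg_right _ hBpos
        have hcard : ((Finset.univ.erase
            ((1,1,1) : Equiv.Perm (Fin k) × Equiv.Perm (Fin k) × Equiv.Perm (Fin k))).card)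
            ≤ (k.factorial)^3 := by
          calc _ ≤ (Finset.univ : Finset
                (Equiv.Perm (Fin k) × Equiv.Perm (Fin k) × Equiv.Perm (Fin k))).card :=
              Finset.card_le_card (Finset.erase_subset _ _)
            _ = (k.factorial)^3 := by
              simp [Finset.card_univ, Fintype.card_perm]
              ring
        calc ((Finset.univ.erase
              ((1,1,1) : Equiv.Perm (Fin k) × Equiv.Perm (Fin k) × Equiv.Perm (Fin k))).card : ℝ)
            ≤ (((k.factorial)^3 : ℕ) : ℝ) := by exact_mod_cast hcard
          _ = K := by rw [hKdef]; push_cast; ring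
    · -- identity triple
      apply le_of_eq
      have hnk : ∀ S T : Finset (Fin n),
          ((S ∩ T).card * cycleNumber
              (((1,1,1) : Equiv.Perm (Fin k) × Equiv.Perm (Fin k) × Equiv.Perm (Fin k)).1
                * ((1,1,1) : Equiv.Perm (Fin k) × Equiv.Perm (Fin k) × Equiv.Perm (Fin k)).2.2
                * ((1,1,1) : Equiv.Perm (Fin k) × Equiv.Perm (Fin k) × Equiv.Perm (Fin k)).2.1)
            + (S ∩ Tᶜ).card * cycleNumber (1 : Equiv.Perm (Fin k))
            + (Sᶜ ∩ T).card * cycleNumber (1 : Equiv.Perm (Fin k))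
            + (Sᶜ ∩ Tᶜ).card * cycleNumber (1 : Equiv.Perm (Fin k))) = n * k := by
        intro S T
        have hc := card_partition S T
        simp only [one_mul, mul_one, cycleNumber_one]
        calc (S ∩ T).card * k + (S ∩ Tᶜ).card * k + (Sᶜ ∩ T).card * k + (Sᶜ ∩ Tᶜ).card * k
            = ((S ∩ T).card + (S ∩ Tᶜ).card + (Sᶜ ∩ T).card + (Sᶜ ∩ Tᶜ).card) * k := by ring
          _ = n * k := by rw [hc]
      calc (∑ S : Finset (Fin n), ∑ T : Finset (Fin n),
              D ^ ((S ∩ T).card * cycleNumber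
                  (((1,1,1) : Equiv.Perm (Fin k) × Equiv.Perm (Fin k) × Equiv.Perm (Fin k)).1
                    * ((1,1,1) : Equiv.Perm (Fin k) × Equiv.Perm (Fin k) × Equiv.Perm (Fin k)).2.2
                    * ((1,1,1) : Equiv.Perm (Fin k) × Equiv.Perm (Fin k) × Equiv.Perm (Fin k)).2.1)
                + (S ∩ Tᶜ).card * cycleNumber (1 : Equiv.Perm (Fin k))
                + (Sᶜ ∩ T).card * cycleNumber (1 : Equiv.Perm (Fin k))
                + (Sᶜ ∩ Tᶜ).card * cycleNumber (1 : Equiv.Perm (Fin k))))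
          = ∑ S : Finset (Fin n), ∑ T : Finset (Fin n), D ^ (n * k) :=
            Finset.sum_congr rfl fun S _ => Finset.sum_congr rfl fun T _ => by rw [hnk S T]
        _ = (2:ℝ)^n * (2:ℝ)^n * D ^ (n * k) := by
            simp [Finset.sum_const, Finset.card_univ, Fintype.card_finset, nsmul_eq_mul]
            push_cast
            ring
  -- final arithmetic
  have hfrac : (0:ℝ) ≤ 1 / ((4:ℝ)^n * K) := by positivity
  refine le_trans (mul_le_mul_of_nonneg_left total_le hfrac) (le_of_eq ?_)
  have h2 : (2:ℝ)^n * (2:ℝ)^n = (4:ℝ)^n := by rw [← mul_pow]; norm_num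
  have hB4 : B = (4:ℝ)^n * D ^ (n * k) * ((1 + D)/(2 * D)) ^ n := by
    rw [hBdef]
    have hbase : 2 * D^k + 2 * D^(k-1) = 4 * D^k * ((1 + D)/(2 * D)) := by
      obtain ⟨m, rfl⟩ : ∃ m, k = m + 1 := ⟨k - 1, by omega⟩
      simp only [Nat.add_sub_cancel]
      field_simp
      ring
    rw [hbase, mul_pow, mul_pow, ← pow_mul']
  rw [h2, hB4]
  have h4 : ((4:ℝ)^n) ≠ 0 := by positivity
  have hKne : K ≠ 0 := ne_of_gt hK
  field_simp
  ring
end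

section
/- Let n, k, d ≥ 1 and define the density matrices ρ := Π^k_{d^n} / C(d^n+k−1, k) and σ := 2^{−n} ∑_{S⊆[n]} (Π^k_{d^{|S|}} ⊗_S Π^k_{d^{n−|S|}}) / (C(d^{|S|}+k−1,k)·C(d^{n−|S|}+k−1,k)) on ((ℂ^d)^{⊗n})^{⊗k}. Then Tr(ρσ) = Tr(ρ²) = 1/C(d^n+k−1,k), and consequently the trace distance satisfies D(ρ,σ)² = (¼)‖ρ−σ‖₁² ≤ (d^{nk}/4)·(Tr(σ²) − Tr(ρ²)). -/
open scoped BigOperators ComplexOrder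

noncomputable def traceNorm {m : Type*} [Fintype m] [DecidableEq m] (A : Matrix m m ℂ) : ℝ :=
  ∑ i, Real.sqrt ((Matrix.isHermitian_conjTranspose_mul_self A).eigenvalues i)

/-- The operator `U^S_α ⊗_S U^{Sᶜ}_β` on `((ℂ^d)^{⊗n})^{⊗k}`: it permutes the `k` copies of
the tensor factors belonging to `S` according to `α` and those belonging to `Sᶜ` according
to `β`. -/
def permPairOn (n k d : ℕ) (S : Finset (Fin n)) (α β : Equiv.Perm (Fin k)) :
    Matrix (Fin k → Fin n → Fin d) (Fin k → Fin n → Fin d) ℂ :=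
  Matrix.of fun y x =>
    if ∀ (i : Fin k) (j : Fin n), x i j = y ((if j ∈ S then α else β) i) j then 1 else 0

/-- The projector `Π^k_{d^{|S|}} ⊗_S Π^k_{d^{n-|S|}}`, i.e. the tensor product of the
projectors onto the symmetric subspaces of the `S` part and the `Sᶜ` part of
`((ℂ^d)^{⊗n})^{⊗k}`. -/
noncomputable def symProjPair (n k d : ℕ) (S : Finset (Fin n)) :
    Matrix (Fin k → Fin n → Fin d) (Fin k → Fin n → Fin d) ℂ :=
  (((k.factorial : ℂ))⁻¹) ^ 2 •
    ∑ α : Equiv.Perm (Fin k), ∑ β : Equiv.Perm (Fin k), permPairOn n k d S α β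

/-- The projector `Π^k_{d^n}` onto the symmetric subspace of `k` copies of `(ℂ^d)^{⊗n}`. -/
noncomputable def symProjFull (n k d : ℕ) :
    Matrix (Fin k → Fin n → Fin d) (Fin k → Fin n → Fin d) ℂ :=
  ((k.factorial : ℂ))⁻¹ • ∑ α : Equiv.Perm (Fin k), permPairOn n k d Finset.univ α α

/-- The state `ρ = Π^k_{d^n} / C(d^n+k-1, k)`. -/
noncomputable def rhoState (n k d : ℕ) :
    Matrix (Fin k → Fin n → Fin d) (Fin k → Fin n → Fin d) ℂ :=
  (((d ^ n + k - 1).choose k : ℂ))⁻¹ • symProjFull n k d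

/-- The state `τ_S = (Π^k_{d^{|S|}} ⊗_S Π^k_{d^{n-|S|}}) / (C(d^{|S|}+k-1,k)·C(d^{n-|S|}+k-1,k))`. -/
noncomputable def tauState (n k d : ℕ) (S : Finset (Fin n)) :
    Matrix (Fin k → Fin n → Fin d) (Fin k → Fin n → Fin d) ℂ :=
  (((d ^ S.card + k - 1).choose k : ℂ) * ((d ^ (n - S.card) + k - 1).choose k : ℂ))⁻¹ •
    symProjPair n k d S

/-- The state `σ = 2^{-n} ∑_{S ⊆ [n]} τ_S`. -/
noncomputable def sigmaState (n k d : ℕ) :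
    Matrix (Fin k → Fin n → Fin d) (Fin k → Fin n → Fin d) ℂ :=
  ((2 : ℂ) ^ n)⁻¹ • ∑ S : Finset (Fin n), tauState n k d S

/-- A vector is a unit vector if the sum of the squared moduli of its entries is 1. -/
def isUnitVec {I : Type*} [Fintype I] (ψ : I → ℂ) : Prop := ∑ x, ‖ψ x‖ ^ 2 = 1

/-- A state `ψ ∈ (ℂ^d)^{⊗n}` is bipartite product if there is a nonempty proper subset
`S ⊂ [n]` and unit vectors on the factors in `S` and in `Sᶜ` whose tensor product is `ψ`. -/
def IsBP {n d : ℕ} (ψ : (Fin n → Fin d) → ℂ) : Prop :=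
  ∃ S : Finset (Fin n), S.Nonempty ∧ S ≠ Finset.univ ∧
    ∃ (φ : ({j : Fin n // j ∈ S} → Fin d) → ℂ) (τ : ({j : Fin n // j ∉ S} → Fin d) → ℂ),
      isUnitVec φ ∧ isUnitVec τ ∧
      ∀ x : Fin n → Fin d, ψ x = φ (fun j => x j.1) * τ (fun j => x j.1)

/-- The `k`-fold tensor power `|ψ⟩⟨ψ|^{⊗ k}` of the rank-one projector onto `ψ`. -/
noncomputable def kcopy {n d : ℕ} (k : ℕ) (ψ : (Fin n → Fin d) → ℂ) :
    Matrix (Fin k → Fin n → Fin d) (Fin k → Fin n → Fin d) ℂ :=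
  Matrix.of fun X Y => ∏ i : Fin k, ψ (X i) * (starRingEnd ℂ) (ψ (Y i))

/-- `ψ` is `ε`-far from bipartite product: every bipartite product unit vector `φ` satisfies
`½‖|ψ⟩⟨ψ| - |φ⟩⟨φ|‖₁ ≥ ε`. -/
def IsFarFromBP {n d : ℕ} (ε : ℝ) (ψ : (Fin n → Fin d) → ℂ) : Prop :=
  ∀ φ : (Fin n → Fin d) → ℂ, isUnitVec φ → IsBP φ →
    ε ≤ (1 / 2) * traceNorm (Matrix.vecMulVec ψ (star ψ) - Matrix.vecMulVec φ (star φ))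

/-- An `ε`-tester for bipartite productness using `k` copies: a POVM element `M` with
`0 ≤ M ≤ 1` accepting every bipartite product state with probability at least `2/3` and every
state `ε`-far from bipartite product with probability at most `1/3`. -/
def IsTester {n d : ℕ} (ε : ℝ) (k : ℕ)
    (M : Matrix (Fin k → Fin n → Fin d) (Fin k → Fin n → Fin d) ℂ) : Prop :=
  M.PosSemidef ∧ (1 - M).PosSemidef ∧
    (∀ ψ : (Fin n → Fin d) → ℂ, isUnitVec ψ → IsBP ψ →
      (2 / 3 : ℝ) ≤ ((M * kcopy k ψ).trace).re) ∧
    (∀ ψ : (Fin n → Fin d) → ℂ, isUnitVec ψ → IsFarFromBP ε ψ →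
      ((M * kcopy k ψ).trace).re ≤ (1 / 3 : ℝ))

/-!
Each `U_α ⊗_S U_β` is the permutation matrix of a site-wise permutation of the basis
`Fin k → Fin n → Fin d`. These matrices multiply like the permutations, and the trace of one is
its number of fixed basis tuples, a product over the `n` sites. Left multiplication by
`U_γ ⊗ U_γ` only permutes the terms `U_α ⊗_S U_β` of `Π_S` (`(α, β) ↦ (γα, γβ)`), so
`Π^k_{d^n} Π_S = Π_S`, and `Tr(ρ τ_S) = 1 / C(d^n+k-1, k)` because `Tr(Π_S)` is exactly the
normalisation `C(d^{|S|}+k-1, k) C(d^{n-|S|}+k-1, k)` of `τ_S`. That trace comes from Burnside's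
lemma: the orbits of `S_k` on `Fin k → A` are the size-`k` multisets on `A`, so
`∑_σ #{v | v ∘ σ = v} = k! C(|A|+k-1, k)`.

For the trace distance, Cauchy–Schwarz on the singular values gives `‖Δ‖₁² ≤ dim · Tr(Δ²)` for
the Hermitian `Δ = ρ - σ`, and `Tr(ρσ) = Tr(ρ²)` turns `Tr(Δ²)` into `Tr(σ²) - Tr(ρ²)`.
-/

open Matrix Finset Equiv

noncomputable def fixedTupleCount {ι : Type*} (A : Type*) (σ : Perm ι) : ℕ :=
  Nat.card {v : ι → A // v ∘ σ = v}

section Burnside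

variable {k : ℕ} {A : Type*}

def tupleSym (v : Fin k → A) : Sym A k := ⟨univ.val.map v, by simp⟩

lemma tupleSym_comp_perm (v : Fin k → A) (σ : Perm (Fin k)) : tupleSym (v ∘ σ) = tupleSym v := by
  apply Subtype.ext
  simp only [tupleSym, ← Multiset.map_map, Multiset.map_univ_val_equiv]

lemma exists_perm_of_tupleSym_eq [DecidableEq A] {v w : Fin k → A} (h : tupleSym v = tupleSym w) :
    ∃ σ : Perm (Fin k), v = w ∘ σ := by
  have hcount : ∀ a, Fintype.card {i // v i = a} = Fintype.card {i // w i = a} := by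
    intro a
    have := congrArg (fun s : Sym A k => s.1.count a) h
    simp only [tupleSym, Multiset.count_map] at this
    simpa only [Fintype.card_subtype, Finset.card, Finset.filter_val, eq_comm] using this
  let σ : Perm (Fin k) := ofFiberEquiv fun a => Fintype.equivOfCardEq (hcount a)
  exact ⟨σ, funext fun i => (ofFiberEquiv_map _ i).symm⟩

lemma tupleSym_surjective : Function.Surjective (tupleSym : (Fin k → A) → Sym A k) := by
  rintro ⟨s, hs⟩
  induction s using Quotient.inductionOn with | h l => ?_
  obtain rfl : l.length = k := hs
  exact ⟨l.get, Subtype.ext (by simp [tupleSym, Fin.univ_val_map])⟩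

attribute [local instance] arrowAction

variable (k A) [DecidableEq A]

noncomputable def orbitRelQuotientEquivSym :
    MulAction.orbitRel.Quotient (Perm (Fin k)) (Fin k → A) ≃ Sym A k :=
  Equiv.ofBijective
    (Quotient.lift tupleSym fun _ b ⟨σ, hσ⟩ => hσ ▸ tupleSym_comp_perm b σ⁻¹)
    ⟨Quotient.ind₂ fun a b hab => by
        obtain ⟨σ, rfl⟩ := exists_perm_of_tupleSym_eq hab
        exact Quotient.sound
          ⟨σ⁻¹, funext fun i => show b (σ⁻¹⁻¹ • i) = b (σ i) by rw [inv_inv, Perm.smul_def]⟩,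
      fun s => let ⟨v, hv⟩ := tupleSym_surjective s; ⟨⟦v⟧, hv⟩⟩

lemma sum_fixedTupleCount [Fintype A] :
    ∑ σ : Perm (Fin k), fixedTupleCount A σ
      = (Fintype.card A + k - 1).choose k * k.factorial := by
  let := Fintype.ofEquiv _ (orbitRelQuotientEquivSym k A).symm
  have burnside := MulAction.sum_card_fixedBy_eq_card_orbits_mul_card_group
    (Perm (Fin k)) (Fin k → A)
  rw [Fintype.card_congr (orbitRelQuotientEquivSym k A), Sym.card_sym_eq_choose,
    Fintype.card_perm, Fintype.card_fin] at burnside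
  -- under `arrowAction`, `σ • v = v ∘ σ⁻¹`
  rw [← burnside, ← Equiv.sum_comp (Equiv.inv _)]
  refine sum_congr rfl fun σ _ => ?_
  rw [← Nat.card_eq_fintype_card]
  exact Nat.card_congr (Equiv.subtypeEquivRight fun _ => Iff.rfl)

end Burnside

section SitePerm

variable {ι J A : Type*}

def sitePerm (G : J → Perm ι) : Perm (ι → J → A) where
  toFun x i j := x (G j i) j
  invFun x i j := x ((G j).symm i) j
  left_inv x := by ext; simp
  right_inv x := by ext; simp

lemma sitePerm_mul (G H : J → Perm ι) :
    sitePerm (A := A) (G * H) = sitePerm H * sitePerm G := rfl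

lemma sitePerm_inv (G : J → Perm ι) : (sitePerm (A := A) G)⁻¹ = sitePerm G⁻¹ := rfl

lemma card_fixedPoints_sitePerm [Fintype J] (G : J → Perm ι) :
    Nat.card (Function.fixedPoints (sitePerm (A := A) G)) = ∏ j, fixedTupleCount A (G j) := by
  simp only [fixedTupleCount, ← Nat.card_pi]
  exact Nat.card_congr
    { toFun := fun x j => ⟨fun i => x.1 i j, funext fun i => congrFun (congrFun x.2 i) j⟩
      invFun := fun w => ⟨fun i j => (w j).1 i, funext fun i => funext fun j => congrFun (w j).2 i⟩
      left_inv := fun _ => rfl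
      right_inv := fun _ => rfl }

lemma fixedTupleCount_pi [Fintype J] (σ : Perm ι) :
    fixedTupleCount (J → A) σ = fixedTupleCount A σ ^ Fintype.card J := by
  rw [← card_univ, ← prod_const, ← card_fixedPoints_sitePerm]
  exact Nat.card_congr (Equiv.subtypeEquivRight fun _ => Iff.rfl)

variable [Fintype ι] [DecidableEq ι] [Fintype J] [DecidableEq J] [Fintype A] [DecidableEq A]
  {R : Type*} [CommSemiring R]

lemma permMatrix_sitePerm_mul (G H : J → Perm ι) :
    (sitePerm (A := A) G).permMatrix R * (sitePerm H).permMatrix R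
      = (sitePerm (G * H)).permMatrix R := by
  rw [sitePerm_mul, permMatrix_mul]

lemma trace_permMatrix_sitePerm (G : J → Perm ι) :
    ((sitePerm (A := A) G).permMatrix R).trace = ∏ j, (fixedTupleCount A (G j) : R) := by
  rw [trace_permutation, ← Nat.card_coe_set_eq, card_fixedPoints_sitePerm, Nat.cast_prod]

end SitePerm

lemma sum_fixedTupleCount_pow (k m : ℕ) (A : Type*) [Fintype A] [DecidableEq A] :
    ∑ σ : Perm (Fin k), fixedTupleCount A σ ^ m
      = (Fintype.card A ^ m + k - 1).choose k * k.factorial := by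
  have hpow : ∀ σ : Perm (Fin k), fixedTupleCount A σ ^ m = fixedTupleCount (Fin m → A) σ :=
    fun σ => by rw [fixedTupleCount_pi, Fintype.card_fin]
  simp only [hpow, sum_fixedTupleCount, Fintype.card_fun, Fintype.card_fin]

lemma prod_ite_mem_eq_pow_mul_pow {M : Type*} [CommMonoid M] {n : ℕ} (S : Finset (Fin n))
    (a b : M) : ∏ j, (if j ∈ S then a else b) = a ^ #S * b ^ (n - #S) := by
  simp [prod_ite, filter_not, card_sdiff]

section Projectors

variable {n k d : ℕ}

lemma permPairOn_eq_permMatrix (S : Finset (Fin n)) (α β : Perm (Fin k)) :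
    permPairOn n k d S α β = (sitePerm fun j => if j ∈ S then α else β).permMatrix ℂ := by
  ext y x
  simp [permPairOn, sitePerm, PEquiv.toMatrix_apply, funext_iff, eq_comm]

lemma symProjFull_eq_symProjPair_univ : symProjFull n k d = symProjPair n k d univ := by
  have : (k.factorial : ℂ) ≠ 0 := by exact_mod_cast k.factorial_ne_zero
  simp only [symProjFull, symProjPair, permPairOn_eq_permMatrix, mem_univ, if_true, sum_const,
    card_univ, Fintype.card_perm, Fintype.card_fin, ← Nat.cast_smul_eq_nsmul ℂ, smul_sum, smul_smul]
  field_simp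

lemma permMatrix_sitePerm_const_mul_symProjPair (γ : Perm (Fin k)) (S : Finset (Fin n)) :
    (sitePerm (A := Fin d) fun _ => γ).permMatrix ℂ * symProjPair n k d S
      = symProjPair n k d S := by
  simp only [symProjPair, permPairOn_eq_permMatrix, Matrix.mul_smul, Matrix.mul_sum,
    permMatrix_sitePerm_mul]
  congr 1
  refine Fintype.sum_equiv (Equiv.mulLeft γ) _ _ fun α => ?_
  refine Fintype.sum_equiv (Equiv.mulLeft γ) _ _ fun β => ?_
  congr 2
  funext j
  simp only [Pi.mul_apply, coe_mulLeft, apply_ite (γ * ·)]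

lemma symProjFull_mul_symProjPair (S : Finset (Fin n)) :
    symProjFull n k d * symProjPair n k d S = symProjPair n k d S := by
  have : (k.factorial : ℂ) ≠ 0 := by exact_mod_cast k.factorial_ne_zero
  simp only [symProjFull, permPairOn_eq_permMatrix, mem_univ, if_true, Matrix.smul_mul,
    Matrix.sum_mul, permMatrix_sitePerm_const_mul_symProjPair, sum_const, card_univ,
    Fintype.card_perm, Fintype.card_fin, ← Nat.cast_smul_eq_nsmul ℂ, smul_smul,
    inv_mul_cancel₀ this, one_smul]

lemma trace_symProjPair (S : Finset (Fin n)) :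
    (symProjPair n k d S).trace
      = ((d ^ #S + k - 1).choose k : ℂ) * ((d ^ (n - #S) + k - 1).choose k : ℂ) := by
  have hsum : ∀ m, ∑ α : Perm (Fin k), (fixedTupleCount (Fin d) α : ℂ) ^ m
      = ((d ^ m + k - 1).choose k : ℂ) * k.factorial := fun m => by
    exact_mod_cast (Fintype.card_fin d ▸ sum_fixedTupleCount_pow k m (Fin d))
  have : (k.factorial : ℂ) ≠ 0 := by exact_mod_cast k.factorial_ne_zero
  simp only [symProjPair, permPairOn_eq_permMatrix, trace_smul, trace_sum,
    trace_permMatrix_sitePerm, apply_ite, prod_ite_mem_eq_pow_mul_pow, ← sum_mul_sum, hsum,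
    smul_eq_mul]
  field_simp

lemma symProjFull_mul_self : symProjFull n k d * symProjFull n k d = symProjFull n k d := by
  nth_rw 2 [symProjFull_eq_symProjPair_univ]
  rw [symProjFull_mul_symProjPair, symProjFull_eq_symProjPair_univ]

lemma trace_symProjFull : (symProjFull n k d).trace = ((d ^ n + k - 1).choose k : ℂ) := by
  simp [symProjFull_eq_symProjPair_univ, trace_symProjPair]

end Projectors

section States

variable {n k d : ℕ}

lemma isHermitian_symProjPair (S : Finset (Fin n)) : (symProjPair n k d S).IsHermitian := by
  simp only [IsHermitian, symProjPair, permPairOn_eq_permMatrix, conjTranspose_smul,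
    conjTranspose_sum, conjTranspose_permMatrix, sitePerm_inv, star_pow, star_inv₀, star_natCast]
  congr 1
  refine Fintype.sum_equiv (Equiv.inv _) _ _ fun α => ?_
  refine Fintype.sum_equiv (Equiv.inv _) _ _ fun β => ?_
  congr 2
  funext j
  simp only [Pi.inv_apply, apply_ite Inv.inv, Equiv.inv_apply]

lemma isHermitian_rhoState : (rhoState n k d).IsHermitian := by
  simp only [IsHermitian, rhoState, conjTranspose_smul, symProjFull_eq_symProjPair_univ,
    (isHermitian_symProjPair _).eq, star_inv₀, star_natCast]

lemma isHermitian_sigmaState : (sigmaState n k d).IsHermitian := by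
  simp only [IsHermitian, sigmaState, tauState, conjTranspose_smul, conjTranspose_sum,
    (isHermitian_symProjPair _).eq, star_inv₀, star_mul', star_natCast, star_pow, star_ofNat]

lemma choose_pow_add_sub_one_ne_zero (hd : 1 ≤ d) (m : ℕ) :
    ((d ^ m + k - 1).choose k : ℂ) ≠ 0 := by
  have : 1 ≤ d ^ m := Nat.one_le_pow m d hd
  exact_mod_cast (Nat.choose_pos (by omega)).ne'

lemma trace_rhoState_mul_self :
    (rhoState n k d * rhoState n k d).trace = (((d ^ n + k - 1).choose k : ℂ))⁻¹ := by
  simp only [rhoState, Matrix.smul_mul, Matrix.mul_smul, symProjFull_mul_self, trace_smul,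
    trace_symProjFull, smul_eq_mul]
  grind

lemma trace_rhoState_mul_tauState (hd : 1 ≤ d) (S : Finset (Fin n)) :
    (rhoState n k d * tauState n k d S).trace = (((d ^ n + k - 1).choose k : ℂ))⁻¹ := by
  have h₁ := choose_pow_add_sub_one_ne_zero (k := k) hd #S
  have h₂ := choose_pow_add_sub_one_ne_zero (k := k) hd (n - #S)
  simp only [rhoState, tauState, Matrix.smul_mul, Matrix.mul_smul, symProjFull_mul_symProjPair,
    trace_smul, trace_symProjPair, smul_eq_mul]
  field_simp

lemma trace_rhoState_mul_sigmaState (hd : 1 ≤ d) :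
    (rhoState n k d * sigmaState n k d).trace = (((d ^ n + k - 1).choose k : ℂ))⁻¹ := by
  simp only [sigmaState, Matrix.mul_smul, Matrix.mul_sum, trace_smul, trace_sum,
    trace_rhoState_mul_tauState hd, sum_const, card_univ, Fintype.card_finset, Fintype.card_fin,
    nsmul_eq_mul, smul_eq_mul]
  push_cast
  field_simp

end States

lemma traceNorm_sq_le_card_mul_re_trace {m : Type*} [Fintype m] [DecidableEq m]
    (A : Matrix m m ℂ) : traceNorm A ^ 2 ≤ Fintype.card m * (Aᴴ * A).trace.re := by
  set h := isHermitian_conjTranspose_mul_self A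
  have hnonneg : ∀ i, 0 ≤ h.eigenvalues i :=
    (posSemidef_conjTranspose_mul_self A).eigenvalues_nonneg
  calc traceNorm A ^ 2 = (∑ i, √(h.eigenvalues i)) ^ 2 := rfl
    _ ≤ Fintype.card m * ∑ i, √(h.eigenvalues i) ^ 2 := sq_sum_le_card_mul_sum_sq
    _ = Fintype.card m * (Aᴴ * A).trace.re := by
      simp [Real.sq_sqrt (hnonneg _), h.trace_eq_sum_eigenvalues]

lemma trace_sub_mul_sub_of_trace_mul_eq {m R : Type*} [Fintype m] [CommRing R]
    {ρ σ : Matrix m m R} (h : (ρ * σ).trace = (ρ * ρ).trace) :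
    ((ρ - σ) * (ρ - σ)).trace = (σ * σ).trace - (ρ * ρ).trace := by
  rw [sub_mul, mul_sub, mul_sub, trace_sub, trace_sub, trace_sub, trace_mul_comm σ ρ, h]
  ring

theorem trace_rho_sigma_general (n k d : ℕ) (hd : 1 ≤ d) :
    (rhoState n k d * sigmaState n k d).trace = (rhoState n k d * rhoState n k d).trace ∧
    (rhoState n k d * rhoState n k d).trace = (((d ^ n + k - 1).choose k : ℂ))⁻¹ ∧
    ((1 / 2) * traceNorm (rhoState n k d - sigmaState n k d)) ^ 2 ≤
      (d : ℝ) ^ (n * k) / 4 *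
        (((sigmaState n k d * sigmaState n k d).trace).re -
          ((rhoState n k d * rhoState n k d).trace).re) := by
  have hrs : (rhoState n k d * sigmaState n k d).trace = (rhoState n k d * rhoState n k d).trace :=
    (trace_rhoState_mul_sigmaState hd).trans trace_rhoState_mul_self.symm
  refine ⟨hrs, trace_rhoState_mul_self, ?_⟩
  have hbound := traceNorm_sq_le_card_mul_re_trace (rhoState n k d - sigmaState n k d)
  have hcard : (Fintype.card (Fin k → Fin n → Fin d) : ℝ) = d ^ (n * k) := by simp [pow_mul]
  rw [(isHermitian_rhoState.sub isHermitian_sigmaState).eq,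
    trace_sub_mul_sub_of_trace_mul_eq hrs, Complex.sub_re, hcard] at hbound
  linarith

/-- For `n, k, d ≥ 1`, the states `ρ` and `σ` satisfy
`Tr(ρσ) = Tr(ρ²) = 1/C(d^n+k−1,k)`, and consequently
`D(ρ,σ)² ≤ (d^{nk}/4)·(Tr(σ²) − Tr(ρ²))`. -/
theorem trace_rho_sigma (n k d : ℕ) (hn : 1 ≤ n) (hk : 1 ≤ k) (hd : 1 ≤ d) :
    (rhoState n k d * sigmaState n k d).trace = (rhoState n k d * rhoState n k d).trace ∧
    (rhoState n k d * rhoState n k d).trace = (((d ^ n + k - 1).choose k : ℂ))⁻¹ ∧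
    ((1 / 2) * traceNorm (rhoState n k d - sigmaState n k d)) ^ 2 ≤
      (d : ℝ) ^ (n * k) / 4 *
        (((sigmaState n k d * sigmaState n k d).trace).re -
          ((rhoState n k d * rhoState n k d).trace).re) :=
  trace_rho_sigma_general n k d hd
end
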